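/- If E_min(A) is computably reducible to E_min(B) for computable well-orderings A, B of ℕ, then there is an embedding of A into B computable from the halting problem 0'. -/

import Mathlib

/-- The `e`-th computably enumerable set of natural numbers: the domain of the
`e`-th partial computable function. -/
def Wce (e : ℕ) : Set ℕ :=
  {x | ((Denumerable.ofNat Nat.Partrec.Code e).eval x).Dom}


/-- A computable well-ordering of ℕ: a computable (Bool-valued) binary relation
whose associated strict relation is a well-order on ℕ. -/
structure CompWO where
  r : ℕ → ℕ → Bool
  comp : Computable₂ r
  wo : IsWellOrder ℕ (fun a b => r a b = true)

/-- `m` is the `A`-least element of `S`. -/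
def IsMinOf (A : CompWO) (S : Set ℕ) (m : ℕ) : Prop :=
  m ∈ S ∧ ∀ x ∈ S, A.r x m = false

/-- The equivalence relation `E_min(A)` on indices of c.e. sets: `W_e` and `W_i`
have the same `A`-least element, or are both empty. -/
def Emin (A : CompWO) (e i : ℕ) : Prop :=
  (Wce e = ∅ ∧ Wce i = ∅) ∨ ∃ m, IsMinOf A (Wce e) m ∧ IsMinOf A (Wce i) m

/-- Computable reducibility of binary relations on ℕ. -/
def CompReducible (E F : ℕ → ℕ → Prop) : Prop :=
  ∃ h : ℕ → ℕ, Computable h ∧ ∀ x y, E x y ↔ F (h x) (h y)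

/-- The order type of a computable well-ordering. -/
noncomputable def CompWO.otype (A : CompWO) : Ordinal :=
  @Ordinal.type ℕ (fun a b => A.r a b = true) A.wo

/-- The `A`-rank of an element: the order type of its set of predecessors. -/
noncomputable def CompWO.rank (A : CompWO) (a : ℕ) : Ordinal :=
  @Ordinal.typein ℕ (fun a b => A.r a b = true) A.wo a

/-!
Let `f` reduce `E_min(A)` to `E_min(B)` and let `q a` be a uniform index for the cone
`{x | ¬ x <_A a}`, whose `A`-least element is `a`. The embedding sends `a` to the `B`-least
element `g a` of `W_{f (q a)}`; it is the limit of the `B`-least elements of the finite stages of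
that set. Injectivity is immediate from the reduction. That `W_{f (q a)}` is nonempty, and that
`a <_A b` forces `g a <_B g b`, both follow from the recursion theorem: one takes an index `e`
whose set `W_e` is one cone (or `∅`) or another according to what `W_{f e}` enumerates, and the
reduction leaves no consistent choice but the desired one.
-/

open Nat.Partrec (Code)
open Nat.Partrec.Code

namespace CompWO

variable (A : CompWO)

theorem r_irrefl (a : ℕ) : A.r a a = false := by
  have := A.wo
  simpa using irrefl_of (fun a b : ℕ => A.r a b = true) a

theorem r_trans {a b c : ℕ} (hab : A.r a b = true) (hbc : A.r b c = true) :
    A.r a c = true := by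
  have := A.wo
  exact trans_of (fun a b : ℕ => A.r a b = true) hab hbc

theorem eq_of_r_eq_false {a b : ℕ} (hab : A.r a b = false) (hba : A.r b a = false) :
    a = b := by
  have := A.wo
  rcases trichotomous_of (fun a b : ℕ => A.r a b = true) a b with h | h | h
  · simp_all
  · exact h
  · simp_all

theorem exists_isMinOf {S : Set ℕ} (hS : S.Nonempty) : ∃ m, IsMinOf A S m := by
  have wf : WellFounded (fun a b => A.r a b = true) := A.wo.toIsWellFounded.wf
  exact ⟨wf.min S hS, wf.min_mem S hS, fun x hx => by simpa using wf.not_lt_min S hx⟩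

def cone (a : ℕ) : Set ℕ := {x | A.r x a = false}

theorem isMinOf_cone (a : ℕ) : IsMinOf A (A.cone a) a :=
  ⟨A.r_irrefl a, fun _ hx => hx⟩

theorem cone_subset_cone {a b : ℕ} (hab : A.r a b = true) : A.cone b ⊆ A.cone a := by
  intro x (hxb : A.r x b = false)
  show A.r x a = false
  cases hxa : A.r x a
  · rfl
  · simpa [hxb] using A.r_trans hxa hab

theorem computablePred_mem_cone : ComputablePred fun p : ℕ × ℕ => p.2 ∈ A.cone p.1 :=
  ComputablePred.computable_iff.2 ⟨fun p => !A.r p.2 p.1,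
    Primrec.not.to_comp.comp (A.comp.comp Computable.snd Computable.fst),
    by funext p; simp [cone]⟩

end CompWO

namespace IsMinOf

variable {A : CompWO} {S T : Set ℕ} {m m' : ℕ}

theorem unique (h : IsMinOf A S m) (h' : IsMinOf A S m') : m = m' :=
  A.eq_of_r_eq_false (h'.2 m h.1) (h.2 m' h'.1)

theorem of_subset (h : IsMinOf A S m) (hTS : T ⊆ S) (hm : m ∈ T) : IsMinOf A T m :=
  ⟨hm, fun x hx => h.2 x (hTS hx)⟩

end IsMinOf

theorem emin_iff_of_isMinOf {A : CompWO} {i j m : ℕ} (hj : IsMinOf A (Wce j) m) :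
    Emin A i j ↔ IsMinOf A (Wce i) m := by
  constructor
  · rintro (⟨_, hj0⟩ | ⟨m', hi, hj'⟩)
    · exact absurd (hj0 ▸ hj.1) (Set.notMem_empty m)
    · exact hj'.unique hj ▸ hi
  · exact fun hi => Or.inr ⟨m, hi, hj⟩

theorem emin_iff_of_wce_eq_empty {A : CompWO} {i j : ℕ} (hj : Wce j = ∅) :
    Emin A i j ↔ Wce i = ∅ := by
  constructor
  · rintro (⟨hi, _⟩ | ⟨m, _, hm⟩)
    · exact hi
    · exact absurd (hj ▸ hm.1) (Set.notMem_empty m)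
  · exact fun hi => Or.inl ⟨hi, hj⟩

namespace REPred

variable {α β : Type*} [Primcodable α] [Primcodable β] {p q : α → Prop}

theorem comp {p : β → Prop} (hp : REPred p) {f : α → β} (hf : Computable f) :
    REPred fun a => p (f a) :=
  Partrec.comp hp hf

theorem and (hp : REPred p) (hq : REPred q) : REPred fun a => p a ∧ q a :=
  (Partrec.bind hp (hq.comp Computable.fst).to₂).dom_re.of_eq fun a => by simp [Part.assert]

theorem or (hp : REPred p) (hq : REPred q) : REPred fun a => p a ∨ q a := by
  obtain ⟨k, hk, hkdom⟩ := Partrec.merge' hp hq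
  exact hk.dom_re.of_eq fun a => (hkdom a).2.trans (by simp [Part.assert])

end REPred

theorem wce_encode (c : Code) : Wce (Encodable.encode c) = {x | (eval c x).Dom} := by
  simp only [Wce, Denumerable.ofNat_encode]

theorem rePred_mem_wce : REPred fun p : ℕ × ℕ => p.2 ∈ Wce p.1 :=
  (eval_part.comp ((Computable.ofNat Code).comp Computable.fst) Computable.snd).dom_re

theorem rePred_wce_nonempty : REPred fun e => (Wce e).Nonempty := by
  have h : Partrec fun e => Nat.rfindOpt fun n =>
      evaln n.unpair.1 (Denumerable.ofNat Code e) n.unpair.2 :=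
    Partrec.rfindOpt (primrec_evaln.to_comp.comp
      ((((Primrec.fst.comp Primrec.unpair).to_comp.comp Computable.snd).pair
        ((Computable.ofNat Code).comp Computable.fst)).pair
        ((Primrec.snd.comp Primrec.unpair).to_comp.comp Computable.snd)))
  refine h.dom_re.of_eq fun e => Nat.rfindOpt_dom.trans ⟨?_, ?_⟩
  · rintro ⟨n, y, hy⟩
    exact ⟨n.unpair.2, Part.dom_iff_mem.2 ⟨y, evaln_sound hy⟩⟩
  · rintro ⟨x, hx⟩
    obtain ⟨y, hy⟩ := Part.dom_iff_mem.1 hx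
    obtain ⟨k, hk⟩ := evaln_complete.1 hy
    exact ⟨Nat.pair k x, y, by simpa using hk⟩

theorem exists_computable_wce_eq {R : ℕ → ℕ → Prop}
    (hR : REPred fun p : ℕ × ℕ => R p.1 p.2) :
    ∃ q : ℕ → ℕ, Computable q ∧ ∀ a, Wce (q a) = {y | R a y} := by
  have hN : Nat.Partrec fun n =>
      (Part.assert (R n.unpair.1 n.unpair.2) fun _ => Part.some ()).map fun _ => 0 :=
    Partrec.nat_iff.1 ((hR.comp Primrec.unpair.to_comp).map (Computable.const 0).to₂)
  obtain ⟨c, hc⟩ := exists_code.1 hN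
  refine ⟨fun a => Encodable.encode (curry c a), Computable.encode.comp
    (primrec₂_curry.to_comp.comp (Computable.const c) Computable.id), fun a => ?_⟩
  ext y
  simp [wce_encode, eval_curry, hc, Part.assert]

theorem exists_wce_eq_self {R : ℕ → ℕ → Prop}
    (hR : REPred fun p : ℕ × ℕ => R p.1 p.2) : ∃ e, Wce e = {y | R e y} := by
  obtain ⟨q, hq, hqR⟩ := exists_computable_wce_eq hR
  obtain ⟨c, hc⟩ := fixed_point ((Computable.ofNat Code).comp (hq.comp Computable.encode))
  exact ⟨Encodable.encode c, by rw [wce_encode, ← hc, ← hqR]; rfl⟩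


def wceStage (e s y : ℕ) : Bool :=
  (evaln s (Denumerable.ofNat Code e) y).isSome

theorem computable_wceStage : Computable₂ fun (es : ℕ × ℕ) y => wceStage es.1 es.2 y :=
  Primrec.option_isSome.to_comp.comp (primrec_evaln.to_comp.comp
    (((Computable.snd.comp Computable.fst).pair
      ((Computable.ofNat Code).comp (Computable.fst.comp Computable.fst))).pair Computable.snd))

theorem mem_wce_of_wceStage {e s y : ℕ} (h : wceStage e s y = true) : y ∈ Wce e := by
  obtain ⟨z, hz⟩ := Option.isSome_iff_exists.1 h
  exact Part.dom_iff_mem.2 ⟨z, evaln_sound hz⟩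

theorem wceStage_eventually {e y : ℕ} (h : y ∈ Wce e) :
    ∃ t, ∀ s, t ≤ s → wceStage e s y = true := by
  obtain ⟨z, hz⟩ := Part.dom_iff_mem.1 h
  obtain ⟨t, ht⟩ := evaln_complete.1 hz
  exact ⟨t, fun s hts => Option.isSome_iff_exists.2 ⟨z, evaln_mono hts ht⟩⟩

namespace CompWO

def finMin (B : CompWO) (p : ℕ → Bool) : ℕ → Option ℕ
  | 0 => none
  | k + 1 => bif p k && (finMin B p k).elim true (B.r k) then some k else finMin B p k

variable {B : CompWO}

theorem finMin_isSome {p : ℕ → Bool} {y : ℕ} (hy : p y = true) :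
    ∀ {k}, y < k → (B.finMin p k).isSome
  | 0, hy0 => absurd hy0 (Nat.not_lt_zero y)
  | k + 1, hyk => by
    rcases Nat.lt_succ_iff_lt_or_eq.1 hyk with hlt | rfl
    · have ih := finMin_isSome hy hlt
      simp only [finMin]
      cases p k && (B.finMin p k).elim true (B.r k) <;> simp [ih]
    · simp only [finMin, hy, Bool.true_and]
      cases h : B.finMin p y with
      | none => rfl
      | some x => simp only [Option.elim]; cases B.r y x <;> rfl

theorem isMinOf_of_finMin_eq_some {p : ℕ → Bool} :
    ∀ {k x}, B.finMin p k = some x → IsMinOf B {y | y < k ∧ p y = true} x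
  | 0, _, hx => by simp [finMin] at hx
  | k + 1, x, hx => by
    have hlt : ∀ {z}, z < k + 1 → z < k ∨ z = k := Nat.lt_succ_iff_lt_or_eq.1
    simp only [finMin] at hx
    cases hc : p k && (finMin B p k).elim true (B.r k) with
    | true =>
      obtain rfl : k = x := by simpa [hc] using hx
      obtain ⟨hpk, hmin⟩ := Bool.and_eq_true_iff.1 hc
      refine ⟨⟨k.lt_succ_self, hpk⟩, fun z ⟨hzk, hpz⟩ => ?_⟩
      rcases hlt hzk with hzk | rfl
      · cases hprev : finMin B p k with
        | none => exact absurd (finMin_isSome (B := B) hpz hzk) (by simp [hprev])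
        | some y =>
          simp only [hprev, Option.elim] at hmin
          have hzy := (isMinOf_of_finMin_eq_some hprev).2 z ⟨hzk, hpz⟩
          cases hzk' : B.r z k
          · rfl
          · simpa [hzy] using B.r_trans hzk' hmin
      · exact B.r_irrefl z
    | false =>
      simp only [hc, cond_false] at hx
      have ih := isMinOf_of_finMin_eq_some hx
      refine ⟨⟨Nat.lt_succ_of_lt ih.1.1, ih.1.2⟩, fun z ⟨hzk, hpz⟩ => ?_⟩
      rcases hlt hzk with hzk | rfl
      · exact ih.2 z ⟨hzk, hpz⟩
      · simpa [hpz, hx] using hc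

theorem computable_finMin {α : Type*} [Primcodable α] {p : α → ℕ → Bool}
    (hp : Computable₂ p) : Computable₂ fun a k => B.finMin (p a) k := by
  have helim : Computable₂ fun (_ : α × ℕ) (jm : ℕ × Option ℕ) =>
      Option.casesOn (motive := fun _ => Bool) jm.2 true (B.r jm.1) :=
    Computable.option_casesOn (Computable.snd.comp Computable.snd) (Computable.const true)
      (B.comp.comp ((Computable.fst.comp Computable.snd).comp Computable.fst) Computable.snd)
  have hcond : Computable₂ fun (x : α × ℕ) (jm : ℕ × Option ℕ) =>
      p x.1 jm.1 && Option.casesOn (motive := fun _ => Bool) jm.2 true (B.r jm.1) :=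
    Primrec.and.to_comp.comp (hp.comp (Computable.fst.comp Computable.fst)
        (Computable.fst.comp Computable.snd)) helim
  have hstep : Computable₂ fun (x : α × ℕ) (jm : ℕ × Option ℕ) =>
      bif p x.1 jm.1 && jm.2.elim true (B.r jm.1) then some jm.1 else jm.2 :=
    (Computable.cond hcond (Computable.option_some.comp (Computable.fst.comp Computable.snd))
      (Computable.snd.comp Computable.snd)).of_eq fun ⟨_, _, o⟩ => by cases o <;> rfl
  exact (Computable.nat_rec Computable.snd (Computable.const none) hstep).of_eq
    fun ⟨a, k⟩ => by induction k <;> simp [finMin, *]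

theorem exists_limit_isMinOf_wce (B : CompWO) : ∃ G : ℕ → ℕ → ℕ, Computable₂ G ∧
    ∀ e m, IsMinOf B (Wce e) m → ∃ N, ∀ s, N ≤ s → G e s = m := by
  refine ⟨fun e s => (B.finMin (wceStage e s) s).getD 0, ?_, fun e m hm => ?_⟩
  · exact Computable.option_getD
      ((computable_finMin computable_wceStage).comp Computable.id Computable.snd)
      (Computable.const 0)
  · obtain ⟨t, ht⟩ := wceStage_eventually hm.1
    refine ⟨max t (m + 1), fun s hs => ?_⟩
    have hms := ht s (le_of_max_le_left hs)
    obtain ⟨x, hx⟩ := Option.isSome_iff_exists.1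
      (finMin_isSome hms (le_of_max_le_right hs))
    have hstage_subset : {y | y < s ∧ wceStage e s y = true} ⊆ Wce e :=
      fun _ hy => mem_wce_of_wceStage hy.2
    have hxm := (hm.of_subset hstage_subset ⟨le_of_max_le_right hs, hms⟩).unique
      (isMinOf_of_finMin_eq_some hx)
    simp [hx, hxm]

end CompWO

section Reduction

variable {A B : CompWO} {f q g : ℕ → ℕ}

theorem wce_nonempty_of_reduction (hf : Computable f)
    (hred : ∀ x y, Emin A x y ↔ Emin B (f x) (f y)) (hq : ∀ a, Wce (q a) = A.cone a)
    (a : ℕ) : (Wce (f (q a))).Nonempty := by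
  obtain ⟨e, he⟩ := exists_wce_eq_self
    (R := fun e y => y ∈ A.cone a ∧ (Wce (f e)).Nonempty)
    ((A.computablePred_mem_cone.to_re.comp ((Computable.const a).pair Computable.snd)).and
      (rePred_wce_nonempty.comp (hf.comp Computable.fst)))
  by_contra hempty
  have key := hred e (q a)
  rw [emin_iff_of_isMinOf (hq a ▸ A.isMinOf_cone a),
    emin_iff_of_wce_eq_empty (Set.not_nonempty_iff_eq_empty.1 hempty),
    ← Set.not_nonempty_iff_eq_empty] at key
  by_cases hne : (Wce (f e)).Nonempty
  · have hcone : Wce e = A.cone a := by rw [he]; ext y; simp [hne]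
    exact key.1 (hcone ▸ A.isMinOf_cone a) hne
  · exact hne (he ▸ (key.2 hne).1).2

theorem isMinOf_of_wce_eq_cone (hred : ∀ x y, Emin A x y ↔ Emin B (f x) (f y))
    (hq : ∀ a, Wce (q a) = A.cone a) (hg : ∀ a, IsMinOf B (Wce (f (q a))) (g a))
    {e a : ℕ} (he : Wce e = A.cone a) : IsMinOf B (Wce (f e)) (g a) :=
  (emin_iff_of_isMinOf (hg a)).1 ((hred e (q a)).1
    ((emin_iff_of_isMinOf (hq a ▸ A.isMinOf_cone a)).2 (he ▸ A.isMinOf_cone a)))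

theorem injective_of_reduction (hred : ∀ x y, Emin A x y ↔ Emin B (f x) (f y))
    (hq : ∀ a, Wce (q a) = A.cone a) (hg : ∀ a, IsMinOf B (Wce (f (q a))) (g a)) :
    Function.Injective g := by
  intro a b hab
  have hb : IsMinOf A (A.cone a) b := by
    rw [← hq a]
    exact (emin_iff_of_isMinOf (hq b ▸ A.isMinOf_cone b)).1
      ((hred _ _).2 ((emin_iff_of_isMinOf (hg b)).2 (hab ▸ hg a)))
  exact (A.isMinOf_cone a).unique hb

theorem map_rel_of_reduction (hf : Computable f)
    (hred : ∀ x y, Emin A x y ↔ Emin B (f x) (f y))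
    (hq : ∀ a, Wce (q a) = A.cone a) (hg : ∀ a, IsMinOf B (Wce (f (q a))) (g a))
    {a b : ℕ} (hab : A.r a b = true) : B.r (g a) (g b) = true := by
  obtain ⟨e, he⟩ := exists_wce_eq_self
    (R := fun e y => y ∈ A.cone b ∨ (y ∈ A.cone a ∧ g b ∈ Wce (f e)))
    ((A.computablePred_mem_cone.to_re.comp ((Computable.const b).pair Computable.snd)).or
      ((A.computablePred_mem_cone.to_re.comp ((Computable.const a).pair Computable.snd)).and
        (rePred_mem_wce.comp ((hf.comp Computable.fst).pair (Computable.const (g b))))))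
  have hgb : g b ∈ Wce (f e) := by
    by_contra h
    exact h (isMinOf_of_wce_eq_cone hred hq hg (by rw [he]; ext y; simp [h])).1
  have hga : IsMinOf B (Wce (f e)) (g a) := isMinOf_of_wce_eq_cone hred hq hg (by
    rw [he]; ext y; simpa [hgb] using @A.cone_subset_cone a b hab y)
  have hne : g a ≠ g b := (injective_of_reduction hred hq hg).ne fun h => by
    simp [h, A.r_irrefl] at hab
  by_contra h
  exact hne (B.eq_of_r_eq_false (by simpa using h) (hga.2 _ hgb))

end Reduction

/-- `0'`-computability of `g` is expressed through the limit lemma: `g` is the pointwise limit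
of a computable `G`. -/
theorem stmt8 (A B : CompWO) (h : CompReducible (Emin A) (Emin B)) :
    ∃ g : ℕ → ℕ,
      (∃ G : ℕ → ℕ → ℕ, Computable₂ G ∧ ∀ a, ∃ N, ∀ s, N ≤ s → G a s = g a) ∧
      Function.Injective g ∧
      ∀ a b, A.r a b = true → B.r (g a) (g b) = true := by
  obtain ⟨f, hf, hred⟩ := h
  obtain ⟨q, hqc, hq : ∀ a, Wce (q a) = A.cone a⟩ :=
    exists_computable_wce_eq (R := fun a y => y ∈ A.cone a) A.computablePred_mem_cone.to_re
  choose g hg using fun a => B.exists_isMinOf (wce_nonempty_of_reduction hf hred hq a)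
  obtain ⟨G, hG, hGlim⟩ := B.exists_limit_isMinOf_wce
  refine ⟨g, ⟨fun a s => G (f (q a)) s, ?_, fun a => hGlim _ _ (hg a)⟩,
    injective_of_reduction hred hq hg, fun a b => map_rel_of_reduction hf hred hq hg⟩
  exact hG.comp ((hf.comp hqc).comp Computable.fst) Computable.snd
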